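/- arXiv:2504.06773 — 7 statements merged into one kernel-verified Lean document; each statement's English description precedes it below -/
import Mathlib

section
/- Let λ∈(0,1), α=(α₁,α₂)∈ℝ², and let φ:ℝ→ℝ be C¹, 1-periodic with ∫₀¹ φ(x)dx=0. Let ψ:ℝ→ℝ be continuous and 1-periodic, set g(x):=x+α₁+λψ(x)+φ(x), and assume g is a homeomorphism of ℝ. Then the graph Γ={(x,ψ(x)) : x∈ℝ} is invariant under F^♭_{λ,α} if and only if for every x∈ℝ: (1/(1+λ))·g(x) + (λ/(1+λ))·g⁻¹(x) = x + (1/(1+λ))·((1−λ)α₁ + λα₂ + φ(x)). -/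
/-! Since `g` is the first coordinate of `F^♭` along the graph of `ψ` and `g` is onto, the graph is
invariant exactly when `ψ ∘ g = α₂ + λψ + φ`. Because `g - id = α₁ + λψ + φ`, this says
`ψ ∘ g = g - id + α₂ - α₁`, i.e. `g⁻¹ = id - α₁ + α₂ - ψ`; substituting this expression for `λψ`
into `g + λ g⁻¹` gives Herman's formula, and conversely the formula determines `g⁻¹` since `λ ≠ 0`. -/

noncomputable section

open Real MeasureTheory

theorem Set.image_graph_eq_graph_iff {X Y : Type*} {F : X × Y → X × Y} {ψ : X → Y} {g : X → X}
    (hFg : ∀ x, (F (x, ψ x)).1 = g x) (hg : Function.Surjective g) :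
    F '' {p | p.2 = ψ p.1} = {p | p.2 = ψ p.1} ↔ ∀ x, (F (x, ψ x)).2 = ψ (g x) := by
  constructor
  · intro hinv x
    have hmem : F (x, ψ x) ∈ {p : X × Y | p.2 = ψ p.1} := hinv ▸ Set.mem_image_of_mem F rfl
    rwa [Set.mem_ofPred_eq, hFg] at hmem
  · intro hF
    apply Set.Subset.antisymm
    · rintro _ ⟨⟨x, y⟩, (rfl : y = ψ x), rfl⟩
      rw [Set.mem_ofPred_eq, hFg, hF]
    · rintro ⟨a, b⟩ (rfl : b = ψ a)
      obtain ⟨x, rfl⟩ := hg a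
      refine ⟨(x, ψ x), rfl, ?_⟩
      rw [Prod.ext_iff, hFg, hF]
      exact ⟨rfl, rfl⟩

theorem herman_average_eq_iff {K : Type*} [Field K] {lam a₁ a₂ c s x y : K}
    (h₀ : lam ≠ 0) (h₁ : 1 + lam ≠ 0) :
    1 / (1 + lam) * (x + a₁ + lam * s + c) + lam / (1 + lam) * y
        = x + 1 / (1 + lam) * ((1 - lam) * a₁ + lam * a₂ + c) ↔
      y = x - a₁ + a₂ - s := by
  have hdiff : 1 / (1 + lam) * (x + a₁ + lam * s + c) + lam / (1 + lam) * y
      - (x + 1 / (1 + lam) * ((1 - lam) * a₁ + lam * a₂ + c))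
        = lam / (1 + lam) * (y - (x - a₁ + a₂ - s)) := by
    field_simp
    ring
  rw [← sub_eq_zero, hdiff, mul_eq_zero, div_eq_zero_iff, sub_eq_zero]
  simp [h₀, h₁]

theorem herman_formula_dim1_general (lam α₁ α₂ : ℝ) (hlam : lam ∈ Set.Ioo (0 : ℝ) 1)
    (φ : ℝ → ℝ)
    (ψ : ℝ → ℝ)
    (g ginv : ℝ → ℝ) (hg : ∀ x, g x = x + α₁ + lam * ψ x + φ x)
    (hleft : ∀ x, ginv (g x) = x) (hright : ∀ x, g (ginv x) = x) :
    ((fun p : ℝ × ℝ => (p.1 + α₁ + lam * p.2 + φ p.1, α₂ + lam * p.2 + φ p.1)) ''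
        {p : ℝ × ℝ | p.2 = ψ p.1} = {p : ℝ × ℝ | p.2 = ψ p.1}) ↔
      ∀ x : ℝ, (1 / (1 + lam)) * g x + (lam / (1 + lam)) * ginv x
        = x + (1 / (1 + lam)) * ((1 - lam) * α₁ + lam * α₂ + φ x) := by
  have hsurj : Function.Surjective g := Function.RightInverse.surjective hright
  refine (Set.image_graph_eq_graph_iff (fun x => (hg x).symm) hsurj).trans ?_
  calc (∀ x, α₂ + lam * ψ x + φ x = ψ (g x))
      ↔ ∀ x, ginv (g x) = g x - α₁ + α₂ - ψ (g x) := forall_congr' fun x => by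
        rw [hleft, hg]
        constructor <;> intro h <;> linarith
    _ ↔ ∀ y, ginv y = y - α₁ + α₂ - ψ y := (hsurj.forall (p := fun y => ginv y = y - α₁ + α₂ - ψ y)).symm
    _ ↔ _ := forall_congr' fun x => by
        rw [hg]
        exact (herman_average_eq_iff hlam.1.ne' (by linarith [hlam.1])).symm

theorem herman_formula_dim1 (lam α₁ α₂ : ℝ) (hlam : lam ∈ Set.Ioo (0 : ℝ) 1)
    (φ : ℝ → ℝ) (hφ : ContDiff ℝ 1 φ) (hφper : ∀ x, φ (x + 1) = φ x)
    (hφavg : (∫ x in (0 : ℝ)..1, φ x) = 0)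
    (ψ : ℝ → ℝ) (hψ : Continuous ψ) (hψper : ∀ x, ψ (x + 1) = ψ x)
    (g ginv : ℝ → ℝ) (hg : ∀ x, g x = x + α₁ + lam * ψ x + φ x)
    -- g is a homeomorphism of ℝ with inverse ginv
    (hgc : Continuous g) (hginvc : Continuous ginv)
    (hleft : ∀ x, ginv (g x) = x) (hright : ∀ x, g (ginv x) = x) :
    ((fun p : ℝ × ℝ => (p.1 + α₁ + lam * p.2 + φ p.1, α₂ + lam * p.2 + φ p.1)) ''
        {p : ℝ × ℝ | p.2 = ψ p.1} = {p : ℝ × ℝ | p.2 = ψ p.1}) ↔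
      ∀ x : ℝ, (1 / (1 + lam)) * g x + (lam / (1 + lam)) * ginv x
        = x + (1 / (1 + lam)) * ((1 - lam) * α₁ + lam * α₂ + φ x) :=
  herman_formula_dim1_general lam α₁ α₂ hlam φ ψ g ginv hg hleft hright
end
end

section
/- Let d≥1, λ∈(0,1), β∈ℝ^d, and let Φ:ℝ^d→ℝ be C² and ℤ^d-periodic. Let Ψ:ℝ^d→ℝ^d be of the form Ψ(x)=c+Dη(x) with c∈ℝ^d constant and η:ℝ^d→ℝ a C¹ ℤ^d-periodic function. Set g(x):=x+λ(β+Ψ(x)+DΦ(x)) and assume g is a homeomorphism of ℝ^d. Then the graph L={(x,Ψ(x)) : x∈ℝ^d} is invariant under F^♭_{λ,β} if and only if for every x∈ℝ^d: (1/(1+λ))·g(x) + (λ/(1+λ))·g⁻¹(x) = x + (λ/(1+λ))·((1−λ)β + DΦ(x)). -/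
/-!
On the graph of `Ψ` the map acts as `(x, Ψ x) ↦ (g x, λ (Ψ x + DΦ x)) = (g x, g x - x - λβ)`, so,
`g` being onto, the image of the graph is the graph of `y ↦ y - g⁻¹ y - λβ`. Invariance therefore
means `Ψ y = y - g⁻¹ y - λβ` for every `y`, and inserting this into the definition of `g` gives
Herman's formula, up to the nonzero factor `λ / (1 + λ)`.
-/

noncomputable section

open Real

/-- The gradient of `f : ℝ^d → ℝ`, as a vector in `ℝ^d`. -/
def gradVec {d : ℕ} (f : (Fin d → ℝ) → ℝ) (x : Fin d → ℝ) : Fin d → ℝ :=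
  fun i => fderiv ℝ f x (Pi.single i 1)

/-- `f` is `ℤ^d`-periodic. -/
def ZdPeriodic {d : ℕ} (f : (Fin d → ℝ) → ℝ) : Prop :=
  ∀ (x : Fin d → ℝ) (m : Fin d → ℤ), f (x + fun i => (m i : ℝ)) = f x

theorem image_graph_eq_range {α β : Type*} {F : α × β → α × β} {Ψ : α → β} {g : α → α}
    {h : α → β} (hF : ∀ x, F (x, Ψ x) = (g x, h x)) :
    F '' {p | p.2 = Ψ p.1} = Set.range fun x => (g x, h x) := by
  ext q
  simp only [Set.mem_image, Set.mem_ofPred_eq, Set.mem_range, Prod.exists]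
  constructor
  · rintro ⟨x, _, rfl, rfl⟩
    exact ⟨x, (hF x).symm⟩
  · rintro ⟨x, rfl⟩
    exact ⟨x, Ψ x, rfl, hF x⟩

theorem range_eq_graph_iff {α β : Type*} {Ψ : α → β} {g : α → α} {h : α → β}
    (hg : Function.Surjective g) :
    (Set.range fun x => (g x, h x)) = {p | p.2 = Ψ p.1} ↔ ∀ x, h x = Ψ (g x) := by
  constructor
  · intro hrange x
    have hmem : (g x, h x) ∈ {p : α × β | p.2 = Ψ p.1} := hrange ▸ Set.mem_range_self x
    exact hmem
  · intro hgraph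
    ext ⟨a, b⟩
    obtain ⟨x, rfl⟩ := hg a
    simp only [Set.mem_range, Set.mem_ofPred_eq, Prod.mk.injEq]
    constructor
    · rintro ⟨y, hy, rfl⟩
      rw [← hy, hgraph]
    · rintro rfl
      exact ⟨x, rfl, hgraph x⟩

theorem herman_identity_iff {𝕜 E : Type*} [Field 𝕜] [AddCommGroup E] [Module 𝕜 E] {lam : 𝕜}
    (hlam : lam ≠ 0) (hlam' : 1 + lam ≠ 0) (x p gi β v : E) :
    (1 / (1 + lam)) • (x + lam • (β + p + v)) + (lam / (1 + lam)) • gi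
        = x + (lam / (1 + lam)) • ((1 - lam) • β + v) ↔ p = x - gi - lam • β := by
  have hdiff : (1 / (1 + lam)) • (x + lam • (β + p + v)) + (lam / (1 + lam)) • gi
      - (x + (lam / (1 + lam)) • ((1 - lam) • β + v))
        = (lam / (1 + lam)) • (p - (x - gi - lam • β)) := by
    match_scalars <;> field_simp <;> ring
  rw [← sub_eq_zero, hdiff, smul_eq_zero, sub_eq_zero, or_iff_right (div_ne_zero hlam hlam')]

theorem herman_formula_dimd_general (d : ℕ) (lam : ℝ) (hlam : lam ∈ Set.Ioo (0 : ℝ) 1)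
    (β : Fin d → ℝ) (Φ : (Fin d → ℝ) → ℝ)
    (Ψ : (Fin d → ℝ) → (Fin d → ℝ))
    (g ginv : (Fin d → ℝ) → (Fin d → ℝ))
    (hg : ∀ x, g x = x + lam • (β + Ψ x + gradVec Φ x))
    (hleft : ∀ x, ginv (g x) = x) (hright : ∀ x, g (ginv x) = x) :
    ((fun p : (Fin d → ℝ) × (Fin d → ℝ) =>
        (p.1 + lam • (β + p.2 + gradVec Φ p.1), lam • (p.2 + gradVec Φ p.1))) ''
        {p | p.2 = Ψ p.1} = {p | p.2 = Ψ p.1}) ↔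
      ∀ x : Fin d → ℝ, (1 / (1 + lam)) • g x + (lam / (1 + lam)) • ginv x
        = x + (lam / (1 + lam)) • ((1 - lam) • β + gradVec Φ x) := by
  have hlam0 : lam ≠ 0 := hlam.1.ne'
  have hlam1 : 1 + lam ≠ 0 := by linarith [hlam.1]
  let e : (Fin d → ℝ) ≃ (Fin d → ℝ) := ⟨g, ginv, hleft, hright⟩
  have hgraph : ∀ x, (x + lam • (β + Ψ x + gradVec Φ x), lam • (Ψ x + gradVec Φ x))
      = (g x, g x - x - lam • β) := by
    intro x
    rw [hg]
    congr 1
    module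
  rw [image_graph_eq_range hgraph, range_eq_graph_iff (g := g) e.surjective, e.forall_congr_left]
  refine forall_congr' fun y => ?_
  change g (ginv y) - ginv y - lam • β = Ψ (g (ginv y)) ↔ _
  rw [hright, hg, herman_identity_iff hlam0 hlam1, eq_comm]

theorem herman_formula_dimd (d : ℕ) (hd : 1 ≤ d) (lam : ℝ) (hlam : lam ∈ Set.Ioo (0 : ℝ) 1)
    (β : Fin d → ℝ) (Φ : (Fin d → ℝ) → ℝ) (hΦ : ContDiff ℝ 2 Φ) (hΦper : ZdPeriodic Φ)
    (c : Fin d → ℝ) (η : (Fin d → ℝ) → ℝ) (hη : ContDiff ℝ 1 η) (hηper : ZdPeriodic η)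
    (Ψ : (Fin d → ℝ) → (Fin d → ℝ)) (hΨ : ∀ x, Ψ x = c + gradVec η x)
    (g ginv : (Fin d → ℝ) → (Fin d → ℝ))
    (hg : ∀ x, g x = x + lam • (β + Ψ x + gradVec Φ x))
    -- g is a homeomorphism of ℝ^d with inverse ginv
    (hgc : Continuous g) (hginvc : Continuous ginv)
    (hleft : ∀ x, ginv (g x) = x) (hright : ∀ x, g (ginv x) = x) :
    ((fun p : (Fin d → ℝ) × (Fin d → ℝ) =>
        (p.1 + lam • (β + p.2 + gradVec Φ p.1), lam • (p.2 + gradVec Φ p.1))) ''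
        {p | p.2 = Ψ p.1} = {p | p.2 = Ψ p.1}) ↔
      ∀ x : Fin d → ℝ, (1 / (1 + lam)) • g x + (lam / (1 + lam)) • ginv x
        = x + (lam / (1 + lam)) • ((1 - lam) • β + gradVec Φ x) :=
  herman_formula_dimd_general d lam hlam β Φ Ψ g ginv hg hleft hright
end
end

section
/- Let S:ℝ^d×ℝ^d→ℝ be a C² function with S(x+m,X+m)=S(x,X) for all m∈ℤ^d, such that for all (x,X) the matrices ∂²S/∂x²(x,X) and ∂²S/∂X²(x,X) are positive definite and ∂²S/∂x∂X(x,X) is negative definite, and such that S(x,X)/‖x−X‖ → +∞ as ‖x−X‖→∞. Then: (i) for each fixed X∈ℝ^d, the map x ↦ (∂S/∂X)(x,X) is a C¹ diffeomorphism of ℝ^d onto ℝ^d; and (ii) for each fixed x∈ℝ^d, the map X ↦ (∂S/∂x)(x,X) is a C¹ diffeomorphism of ℝ^d onto ℝ^d. -/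
/-!
Fix `X`. The derivative of `x ↦ ∂S/∂X(x, X)` is `u ↦ uᵀ ∂²S/∂x∂X`, a negative definite form, so
along every segment the component of the map in the direction of the segment strictly decreases:
the map is injective and so is its derivative. Convexity of `S(x, ·)` gives
`S(x, X) + ⟨∂S/∂X(x, X), x - X⟩ ≤ S(x, x)`, and `S(x, x)` is bounded by periodicity; together with
the superlinear growth of `S` this bounds `‖x - X‖` in terms of `‖∂S/∂X(x, X)‖`, so the map is
proper. An injective proper local diffeomorphism of `ℝ^d` has open and closed, hence full, image,
and the inverse function theorem makes its inverse `C¹`. Part (ii) is part (i) for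
`(x, X) ↦ S(X, x)`, by symmetry of the mixed partial derivatives.
-/

noncomputable section

open Real

/-- Partial gradient of `S` in the first `ℝ^d`-variable. -/
def grad1 {d : ℕ} (S : (Fin d → ℝ) → (Fin d → ℝ) → ℝ) (x X : Fin d → ℝ) : Fin d → ℝ :=
  fun i => fderiv ℝ (fun x' => S x' X) x (Pi.single i 1)

/-- Partial gradient of `S` in the second `ℝ^d`-variable. -/
def grad2 {d : ℕ} (S : (Fin d → ℝ) → (Fin d → ℝ) → ℝ) (x X : Fin d → ℝ) : Fin d → ℝ :=
  fun i => fderiv ℝ (fun X' => S x X') X (Pi.single i 1)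

/-- The Hessian block `∂²S/∂x²(x,X)`. -/
def hessXX {d : ℕ} (S : (Fin d → ℝ) → (Fin d → ℝ) → ℝ) (x X : Fin d → ℝ) :
    Matrix (Fin d) (Fin d) ℝ :=
  Matrix.of fun i j => fderiv ℝ (fun x' => grad1 S x' X j) x (Pi.single i 1)

/-- The Hessian block `∂²S/∂X²(x,X)`. -/
def hessYY {d : ℕ} (S : (Fin d → ℝ) → (Fin d → ℝ) → ℝ) (x X : Fin d → ℝ) :
    Matrix (Fin d) (Fin d) ℝ :=
  Matrix.of fun i j => fderiv ℝ (fun X' => grad2 S x X' j) X (Pi.single i 1)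

/-- The mixed Hessian block `∂²S/∂x∂X(x,X)`. -/
def hessXY {d : ℕ} (S : (Fin d → ℝ) → (Fin d → ℝ) → ℝ) (x X : Fin d → ℝ) :
    Matrix (Fin d) (Fin d) ℝ :=
  Matrix.of fun i j => fderiv ℝ (fun x' => grad2 S x' X j) x (Pi.single i 1)

open Function Set

theorem hasDerivAt_comp_add_smul {E F : Type*} [NormedAddCommGroup E] [NormedSpace ℝ E]
    [NormedAddCommGroup F] [NormedSpace ℝ F] {f : E → F} {p u : E} {t : ℝ}
    (hf : DifferentiableAt ℝ f (p + t • u)) :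
    HasDerivAt (fun t : ℝ => f (p + t • u)) (fderiv ℝ f (p + t • u) u) t := by
  have hline : HasDerivAt (fun t : ℝ => p + t • u) u t := by
    simpa using ((hasDerivAt_id t).smul_const u).const_add p
  exact hf.hasFDerivAt.comp_hasDerivAt t hline

theorem add_le_of_hasDerivAt_of_monotone {φ φ' : ℝ → ℝ} (hφ : ∀ t, HasDerivAt φ (φ' t) t)
    (hmono : Monotone φ') : φ 0 + φ' 0 ≤ φ 1 := by
  obtain ⟨c, hc, hslope⟩ := exists_hasDerivAt_eq_slope φ φ' zero_lt_one
    (fun t _ => (hφ t).continuousAt.continuousWithinAt) (fun t _ => hφ t)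
  have := hmono hc.1.le
  rw [hslope] at this
  linarith

theorem fderiv_fderiv_comm {E F : Type*} [NormedAddCommGroup E] [NormedSpace ℝ E]
    [NormedAddCommGroup F] [NormedSpace ℝ F] {S : E → F → ℝ}
    (hS : ContDiff ℝ 2 fun p : E × F => S p.1 p.2) (x : E) (y : F) (v : E) (w : F) :
    fderiv ℝ (fun y => fderiv ℝ (fun x => S x y) x v) y w =
      fderiv ℝ (fun x => fderiv ℝ (S x) y w) x v := by
  set G := fun p : E × F => S p.1 p.2
  have hG : ∀ p, HasFDerivAt G (fderiv ℝ G p) p :=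
    fun p => (hS.differentiable two_ne_zero p).hasFDerivAt
  have hG' : ∀ u : E × F, ∀ p, HasFDerivAt (fun p => fderiv ℝ G p u)
      ((ContinuousLinearMap.apply ℝ ℝ u).comp (fderiv ℝ (fderiv ℝ G) p)) p := fun u p =>
    (ContinuousLinearMap.apply ℝ ℝ u).hasFDerivAt.comp p
      ((hS.fderiv_right (by norm_num)).differentiable one_ne_zero p).hasFDerivAt
  have hleft : (fun y => fderiv ℝ (fun x => S x y) x v) = fun y => fderiv ℝ G (x, y) (v, 0) :=
    funext fun y => congrArg (· v) ((hG _).comp x (hasFDerivAt_prodMk_left x y)).fderiv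
  have hright : (fun x => fderiv ℝ (S x) y w) = fun x => fderiv ℝ G (x, y) (0, w) :=
    funext fun x => congrArg (· w) ((hG _).comp y (hasFDerivAt_prodMk_right x y)).fderiv
  rw [hleft, hright]
  calc fderiv ℝ (fun y => fderiv ℝ G (x, y) (v, 0)) y w
      = fderiv ℝ (fderiv ℝ G) (x, y) (0, w) (v, 0) :=
        congrArg (· w) ((hG' _ _).comp y (hasFDerivAt_prodMk_right x y)).fderiv
    _ = fderiv ℝ (fderiv ℝ G) (x, y) (v, 0) (0, w) :=
        (hS.contDiffAt.isSymmSndFDerivAt (by simp)) _ _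
    _ = fderiv ℝ (fun x => fderiv ℝ G (x, y) (0, w)) x v :=
        (congrArg (· v) ((hG' _ _).comp x (hasFDerivAt_prodMk_left x y)).fderiv).symm

theorem exists_equiv_contDiff_symm_of_isProperMap
    {E : Type*} [NormedAddCommGroup E] [NormedSpace ℝ E] [FiniteDimensional ℝ E]
    {n : WithTop ℕ∞} (hn : n ≠ 0) {f : E → E} (hf : ContDiff ℝ n f)
    (hf' : ∀ x, Injective (fderiv ℝ f x)) (hinj : Injective f) (hproper : IsProperMap f) :
    ∃ e : E ≃ E, ⇑e = f ∧ ContDiff ℝ n e.symm := by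
  let f' : E → E ≃L[ℝ] E := fun x =>
    (LinearEquiv.ofInjectiveEndo (fderiv ℝ f x : E →ₗ[ℝ] E) (hf' x)).toContinuousLinearEquiv
  have hstrict : ∀ x, HasStrictFDerivAt f (f' x : E →L[ℝ] E) x := fun x =>
    hf.contDiffAt.hasStrictFDerivAt hn
  have hopen : IsOpenMap f := isOpenMap_of_hasStrictFDerivAt_equiv hstrict
  have hsurj : Surjective f := by
    have hclopen : IsClopen (range f) :=
      ⟨hproper.isClosedMap.isClosed_range, hopen.isOpen_range⟩
    exact range_eq_univ.mp (hclopen.eq_univ (range_nonempty f))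
  let e := (Equiv.ofBijective f ⟨hinj, hsurj⟩).toHomeomorphOfContinuousOpen hf.continuous hopen
  exact ⟨e.toEquiv, rfl, e.contDiff_symm (fun x => (hstrict x).hasFDerivAt) hf⟩

theorem isProperMap_of_isBounded_preimage {X Y : Type*} [PseudoMetricSpace X] [ProperSpace X]
    [MetricSpace Y] {f : X → Y} (hf : Continuous f)
    (h : ∀ s, Bornology.IsBounded s → Bornology.IsBounded (f ⁻¹' s)) : IsProperMap f :=
  isProperMap_iff_isCompact_preimage.2 ⟨hf, fun _ hK =>
    Metric.isCompact_of_isClosed_isBounded (hK.isClosed.preimage hf) (h _ hK.isBounded)⟩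

theorem exists_le_of_superlinear {α : Type*} {F N : α → ℝ}
    (hF : ∀ A, ∃ R, ∀ a, R ≤ N a → A ≤ F a / N a) (M K : ℝ) :
    ∃ r, ∀ a, F a ≤ M + K * N a → N a ≤ r := by
  obtain ⟨R, hR⟩ := hF (K + |M| + 1)
  refine ⟨max R 1, fun a ha => le_of_not_gt fun hlt => ?_⟩
  have hN : 1 < N a := (le_max_right _ _).trans_lt hlt
  have hA := (le_div_iff₀ (by linarith)).1 (hR a ((le_max_left _ _).trans hlt.le))
  nlinarith [le_abs_self M, mul_pos (by positivity : (0 : ℝ) < |M| + 1) (sub_pos.2 hN)]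

theorem bddAbove_range_of_forall_add_intCast {ι : Type*} [Fintype ι] {g : (ι → ℝ) → ℝ}
    (hg : Continuous g) (hper : ∀ y (m : ι → ℤ), g (y + fun i => (m i : ℝ)) = g y) :
    BddAbove (range g) := by
  refine ((isCompact_Icc (a := (0 : ι → ℝ)) (b := 1)).bddAbove_image hg.continuousOn).mono ?_
  rintro _ ⟨y, rfl⟩
  refine ⟨fun i => Int.fract (y i),
    ⟨fun i => Int.fract_nonneg _, fun i => (Int.fract_lt_one _).le⟩, ?_⟩
  exact (hper _ fun i => ⌊y i⌋).symm.trans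
    (congrArg g (funext fun i => Int.fract_add_floor (y i)))

section Coordinates

open Matrix

variable {ι : Type*} [Fintype ι]

theorem ContinuousLinearMap.apply_eq_dotProduct [DecidableEq ι] (L : (ι → ℝ) →L[ℝ] ℝ)
    (u : ι → ℝ) : L u = u ⬝ᵥ fun i => L (Pi.single i 1) := by
  conv_lhs => rw [pi_eq_sum_univ' u, map_sum]
  simp [dotProduct]

theorem fderiv_apply_eq_vecMul [DecidableEq ι] {g : (ι → ℝ) → ι → ℝ} {p : ι → ℝ}
    (hg : DifferentiableAt ℝ g p) (u : ι → ℝ) :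
    fderiv ℝ g p u = u ᵥ* Matrix.of fun i j => fderiv ℝ (fun q => g q j) p (Pi.single i 1) := by
  ext j
  calc fderiv ℝ g p u j = fderiv ℝ (fun q => g q j) p u := by rw [fderiv_apply hg j]; rfl
    _ = _ := ContinuousLinearMap.apply_eq_dotProduct _ u

theorem dotProduct_vecMul_self_nonneg {H : Matrix ι ι ℝ} (hH : H.PosSemidef) (u : ι → ℝ) :
    0 ≤ u ⬝ᵥ (u ᵥ* H) := by
  rw [dotProduct_comm, ← dotProduct_mulVec]
  simpa using hH.dotProduct_mulVec_nonneg u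

theorem dotProduct_vecMul_self_neg {H : Matrix ι ι ℝ} (hH : (-H).PosDef) {u : ι → ℝ}
    (hu : u ≠ 0) : u ⬝ᵥ (u ᵥ* H) < 0 := by
  rw [dotProduct_comm, ← dotProduct_mulVec]
  simpa [neg_mulVec] using hH.dotProduct_mulVec_pos hu

theorem abs_dotProduct_le (v w : ι → ℝ) : |v ⬝ᵥ w| ≤ Fintype.card ι * (‖v‖ * ‖w‖) :=
  calc |v ⬝ᵥ w| ≤ ∑ i, |v i| * |w i| := by
        simpa only [dotProduct, abs_mul] using
          Finset.abs_sum_le_sum_abs (fun i => v i * w i) Finset.univ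
    _ ≤ ∑ _i : ι, ‖v‖ * ‖w‖ := by
        gcongr with i
        · exact norm_le_pi_norm v i
        · exact norm_le_pi_norm w i
    _ = Fintype.card ι * (‖v‖ * ‖w‖) := by simp

theorem hasDerivAt_dotProduct_comp_add_smul {g : (ι → ℝ) → ι → ℝ} {p u : ι → ℝ} {t : ℝ}
    (hg : DifferentiableAt ℝ g (p + t • u)) :
    HasDerivAt (fun t : ℝ => u ⬝ᵥ g (p + t • u)) (u ⬝ᵥ fderiv ℝ g (p + t • u) u) t := by
  have h := hasDerivAt_pi.1 (hasDerivAt_comp_add_smul hg)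
  simpa only [dotProduct] using HasDerivAt.fun_sum fun i _ => (h i).const_mul (u i)

theorem injective_of_dotProduct_apply_neg {L : (ι → ℝ) →L[ℝ] (ι → ℝ)}
    (hL : ∀ u, u ≠ 0 → u ⬝ᵥ L u < 0) : Injective L :=
  (injective_iff_map_eq_zero L).2 fun u hu => by_contra fun h0 => by simpa [hu] using hL u h0

theorem injective_of_dotProduct_fderiv_neg {g : (ι → ℝ) → ι → ℝ} (hg : Differentiable ℝ g)
    (hneg : ∀ p u, u ≠ 0 → u ⬝ᵥ fderiv ℝ g p u < 0) : Injective g := by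
  intro X Y hXY
  by_contra hne
  have hanti : StrictAnti fun t : ℝ => (X - Y) ⬝ᵥ g (Y + t • (X - Y)) :=
    strictAnti_of_hasDerivAt_neg (fun t => hasDerivAt_dotProduct_comp_add_smul (hg _))
      (fun t => hneg _ _ (sub_ne_zero.mpr hne))
  simpa [hXY] using hanti zero_lt_one

end Coordinates

section PartialGradient

open Matrix

variable {d : ℕ} {S : (Fin d → ℝ) → (Fin d → ℝ) → ℝ}

theorem contDiff_grad2_left (hS : ContDiff ℝ 2 fun p : (Fin d → ℝ) × (Fin d → ℝ) => S p.1 p.2)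
    (X : Fin d → ℝ) : ContDiff ℝ 1 fun x => grad2 S x X :=
  contDiff_pi.2 fun _ =>
    (hS.fderiv (g := fun _ => X) contDiff_const (by norm_num)).clm_apply contDiff_const

theorem contDiff_grad2_right (hS : ContDiff ℝ 2 fun p : (Fin d → ℝ) × (Fin d → ℝ) => S p.1 p.2)
    (x : Fin d → ℝ) : ContDiff ℝ 1 fun X => grad2 S x X :=
  contDiff_pi.2 fun _ =>
    ((hS.comp (contDiff_const.prodMk contDiff_id)).fderiv_right (by norm_num)).clm_apply
      contDiff_const

theorem fderiv_grad2_left (hS : ContDiff ℝ 2 fun p : (Fin d → ℝ) × (Fin d → ℝ) => S p.1 p.2)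
    (x X u : Fin d → ℝ) : fderiv ℝ (fun x => grad2 S x X) x u = u ᵥ* hessXY S x X :=
  fderiv_apply_eq_vecMul ((contDiff_grad2_left hS X).differentiable one_ne_zero x) u

theorem fderiv_grad2_right (hS : ContDiff ℝ 2 fun p : (Fin d → ℝ) × (Fin d → ℝ) => S p.1 p.2)
    (x X u : Fin d → ℝ) : fderiv ℝ (fun X => grad2 S x X) X u = u ᵥ* hessYY S x X :=
  fderiv_apply_eq_vecMul ((contDiff_grad2_right hS x).differentiable one_ne_zero X) u

theorem hessXY_swap (hS : ContDiff ℝ 2 fun p : (Fin d → ℝ) × (Fin d → ℝ) => S p.1 p.2)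
    (x X : Fin d → ℝ) : hessXY (fun x X => S X x) x X = (hessXY S X x)ᵀ := by
  ext i j
  exact fderiv_fderiv_comm hS X x (Pi.single j 1) (Pi.single i 1)

theorem add_dotProduct_grad2_le
    (hS : ContDiff ℝ 2 fun p : (Fin d → ℝ) × (Fin d → ℝ) => S p.1 p.2)
    (hpos : ∀ x X, (hessYY S x X).PosSemidef) (x X : Fin d → ℝ) :
    S x X + (x - X) ⬝ᵥ grad2 S x X ≤ S x x := by
  set w := x - X
  have hSx : Differentiable ℝ (S x) :=
    (hS.comp (contDiff_const.prodMk contDiff_id)).differentiable two_ne_zero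
  have hφ : ∀ t : ℝ,
      HasDerivAt (fun t : ℝ => S x (X + t • w)) (w ⬝ᵥ grad2 S x (X + t • w)) t :=
    fun t => (ContinuousLinearMap.apply_eq_dotProduct _ w) ▸ hasDerivAt_comp_add_smul (hSx _)
  have hmono : Monotone fun t : ℝ => w ⬝ᵥ grad2 S x (X + t • w) :=
    monotone_of_hasDerivAt_nonneg
      (fun t => hasDerivAt_dotProduct_comp_add_smul
        ((contDiff_grad2_right hS x).differentiable one_ne_zero _))
      (fun t => (fderiv_grad2_right hS x _ w).symm ▸ dotProduct_vecMul_self_nonneg (hpos _ _) w)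
  simpa [w] using add_le_of_hasDerivAt_of_monotone hφ hmono

theorem isProperMap_grad2_left
    (hS : ContDiff ℝ 2 fun p : (Fin d → ℝ) × (Fin d → ℝ) => S p.1 p.2)
    (hdiag : BddAbove (range fun y => S y y)) (hpos : ∀ x X, (hessYY S x X).PosSemidef)
    (hcoer : ∀ A : ℝ, ∃ R : ℝ, ∀ x X : Fin d → ℝ, R ≤ ‖x - X‖ → A ≤ S x X / ‖x - X‖)
    (X : Fin d → ℝ) : IsProperMap fun x => grad2 S x X := by
  obtain ⟨M, hM⟩ := hdiag
  refine isProperMap_of_isBounded_preimage (contDiff_grad2_left hS X).continuous fun s hs => ?_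
  obtain ⟨C, hC⟩ := hs.exists_norm_le
  obtain ⟨r, hr⟩ := exists_le_of_superlinear (F := fun x => S x X) (N := fun x => ‖x - X‖)
    (fun A => (hcoer A).imp fun _ h x => h x X) M (d * C)
  refine (Metric.isBounded_closedBall (x := X) (r := r)).subset fun x hx => ?_
  rw [Metric.mem_closedBall, dist_eq_norm]
  refine hr x ?_
  set g := grad2 S x X
  calc S x X ≤ S x x - (x - X) ⬝ᵥ g := by linarith [add_dotProduct_grad2_le hS hpos x X]
    _ ≤ M + |(x - X) ⬝ᵥ g| := by linarith [neg_abs_le ((x - X) ⬝ᵥ g), hM ⟨x, rfl⟩]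
    _ ≤ M + d * (‖x - X‖ * ‖g‖) := by simpa using abs_dotProduct_le (x - X) g
    _ ≤ M + d * C * ‖x - X‖ := by
        have hgC : ‖g‖ ≤ C := hC _ hx
        rw [mul_assoc, mul_comm C]
        gcongr

theorem exists_equiv_grad2_left
    (hS : ContDiff ℝ 2 fun p : (Fin d → ℝ) × (Fin d → ℝ) => S p.1 p.2)
    (hdiag : BddAbove (range fun y => S y y)) (hpos : ∀ x X, (hessYY S x X).PosSemidef)
    (hneg : ∀ x X, (-hessXY S x X).PosDef)
    (hcoer : ∀ A : ℝ, ∃ R : ℝ, ∀ x X : Fin d → ℝ, R ≤ ‖x - X‖ → A ≤ S x X / ‖x - X‖)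
    (X : Fin d → ℝ) :
    ∃ e : (Fin d → ℝ) ≃ (Fin d → ℝ), (∀ x, e x = grad2 S x X) ∧
      ContDiff ℝ 1 (e : (Fin d → ℝ) → (Fin d → ℝ)) ∧
      ContDiff ℝ 1 (e.symm : (Fin d → ℝ) → (Fin d → ℝ)) := by
  have hf := contDiff_grad2_left hS X
  have hmono : ∀ x u, u ≠ 0 → u ⬝ᵥ fderiv ℝ (fun x => grad2 S x X) x u < 0 := fun x u hu =>
    (fderiv_grad2_left hS x X u).symm ▸ dotProduct_vecMul_self_neg (hneg x X) hu
  obtain ⟨e, he, hsymm⟩ := exists_equiv_contDiff_symm_of_isProperMap one_ne_zero hf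
    (fun x => injective_of_dotProduct_apply_neg (hmono x))
    (injective_of_dotProduct_fderiv_neg (hf.differentiable one_ne_zero) hmono)
    (isProperMap_grad2_left hS hdiag hpos hcoer X)
  exact ⟨e, congrFun he, he ▸ hf, hsymm⟩

end PartialGradient

theorem partial_gradients_are_diffeos (d : ℕ) (S : (Fin d → ℝ) → (Fin d → ℝ) → ℝ)
    (hS : ContDiff ℝ 2 (fun p : (Fin d → ℝ) × (Fin d → ℝ) => S p.1 p.2))
    (hSper : ∀ (x X : Fin d → ℝ) (m : Fin d → ℤ),
      S (x + fun i => (m i : ℝ)) (X + fun i => (m i : ℝ)) = S x X)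
    (hpos1 : ∀ x X : Fin d → ℝ, (hessXX S x X).PosDef)
    (hpos2 : ∀ x X : Fin d → ℝ, (hessYY S x X).PosDef)
    (hneg : ∀ x X : Fin d → ℝ, (-(hessXY S x X)).PosDef)
    (hcoer : ∀ A : ℝ, ∃ R : ℝ, ∀ x X : Fin d → ℝ, R ≤ ‖x - X‖ → A ≤ S x X / ‖x - X‖) :
    (∀ X : Fin d → ℝ, ∃ e : (Fin d → ℝ) ≃ (Fin d → ℝ),
      (∀ x, e x = grad2 S x X) ∧ ContDiff ℝ 1 (e : (Fin d → ℝ) → (Fin d → ℝ)) ∧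
        ContDiff ℝ 1 (e.symm : (Fin d → ℝ) → (Fin d → ℝ))) ∧
    (∀ x : Fin d → ℝ, ∃ e : (Fin d → ℝ) ≃ (Fin d → ℝ),
      (∀ X, e X = grad1 S x X) ∧ ContDiff ℝ 1 (e : (Fin d → ℝ) → (Fin d → ℝ)) ∧
        ContDiff ℝ 1 (e.symm : (Fin d → ℝ) → (Fin d → ℝ))) := by
  have hdiag : BddAbove (range fun y => S y y) :=
    bddAbove_range_of_forall_add_intCast (hS.continuous.comp (continuous_id.prodMk continuous_id))
      fun y m => hSper y y m
  refine ⟨exists_equiv_grad2_left hS hdiag (fun x X => (hpos2 x X).posSemidef) hneg hcoer,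
    fun x => ?_⟩
  -- For `S' X x = S x X`, `grad2 S' X x` and `hessYY S' X x` are `grad1 S x X` and `hessXX S x X`
  -- by definition.
  refine exists_equiv_grad2_left (S := fun X x => S x X)
    (hS.comp (contDiff_snd.prodMk contDiff_fst)) hdiag (fun X x => (hpos1 x X).posSemidef)
    (fun X x => ?_) (fun A => (hcoer A).imp fun _ h X x hR => ?_) x
  · rw [hessXY_swap hS, ← Matrix.transpose_neg]
    exact (hneg x X).transpose
  · rw [norm_sub_rev] at hR ⊢
    exact h x X hR
end
end

section
/- Let λ∈(0,1), α=(α₁,α₂)∈ℝ², and let φ:ℝ→ℝ be C¹, 1-periodic with ∫₀¹ φ(x)dx=0. Set M:=max_{x∈[0,1]} φ′(x) and m:=min_{x∈[0,1]} φ′(x) (so m≤0≤M). If the perturbed map F^♭_{λ,α}(x,y)=(x+α₁+λy+φ(x), α₂+λy+φ(x)) admits a C⁰-invariant graph, then m > −(1+λ) and (1 + m/(1+λ))⁻¹ ≤ max{ (1+λ)/2 + M/2 + ((1−λ)²/4 + M²/4 + (1+λ)M/2)^{1/2}, (1/(2λ))·(1+λ+M+((1+λ+M)²−4λ)^{1/2})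 }. -/
noncomputable section

open Real MeasureTheory

/-- `F` admits a `C⁰`-invariant graph `Γ = {(x, ψ x)}` with `ψ` continuous and `1`-periodic. -/
def HasInvGraph (F : ℝ × ℝ → ℝ × ℝ) : Prop :=
  ∃ ψ : ℝ → ℝ, Continuous ψ ∧ (∀ x, ψ (x + 1) = ψ x) ∧
    F '' {p : ℝ × ℝ | p.2 = ψ p.1} = {p : ℝ × ℝ | p.2 = ψ p.1}

/-!
An invariant graph `y = ψ x` yields the circle map `g x = x + α₁ + λ ψ x + φ x`, and since
the two coordinates of `F` differ by `x + α₁ - α₂`, the map `h u = u - α₁ + α₂ - ψ u` inverts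
it; so `g` is an increasing homeomorphism with
`slope g = 1 + λ + slope φ - λ slope h ≤ K - λ slope h`, where `K = 1 + λ + M`.
As `slope h` is the reciprocal of a slope of `g`, the supremum `S` and the infimum `s` of the
secant slopes of `g` both satisfy `X² - K X + λ ≤ 0`, so all slopes of `g` lie in `[K - A, A]`,
`A` the larger root. Near a minimum point of `φ'` the slope of `g` is at most
`1 + λ + m - λ / A`, whence `2 λ / A ≤ 1 + λ + m`, i.e. `(1 + m / (1 + λ))⁻¹ ≤ (1 + λ) A / (2 λ)`,
which is below `A / λ`, the second term of the maximum.
-/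

open Filter Function Set

theorem Function.Periodic.deriv {𝕜 F : Type*} [NontriviallyNormedField 𝕜] [NormedAddCommGroup F]
    [NormedSpace 𝕜 F] {f : 𝕜 → F} {c : 𝕜} (hf : Periodic f c) : Periodic (deriv f) c := fun x => by
  rw [← deriv_comp_add_const, funext hf]

theorem Continuous.surjective_of_periodic_sub {f : ℝ → ℝ} {c : ℝ} (hf : Continuous f)
    (hc : c ≠ 0) (hper : Periodic (fun x => f x - x) c) : Surjective f := by
  obtain ⟨B, hB⟩ := (hper.isBounded_of_continuous hc (by fun_prop)).exists_norm_le
  have hfB : ∀ x, |f x - x| ≤ B := fun x => hB _ ⟨x, rfl⟩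
  refine hf.surjective ?_ ?_
  · refine tendsto_atTop_mono (fun x => ?_) (tendsto_atTop_add_const_right _ (-B) tendsto_id)
    linarith [(abs_le.mp (hfB x)).1, show id x = x from rfl]
  · refine tendsto_atBot_mono (fun x => ?_) (tendsto_atBot_add_const_right _ B tendsto_id)
    linarith [(abs_le.mp (hfB x)).2, show id x = x from rfl]

theorem slope_le_of_periodic_of_deriv_le {f : ℝ → ℝ} {c C : ℝ} (hper : Periodic f c) (hc : 0 < c)
    (hf : Differentiable ℝ f) (hC : ∀ x ∈ Icc 0 c, deriv f x ≤ C) {x y : ℝ} (hxy : x < y) :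
    slope f x y ≤ C := by
  have hC' : ∀ x, deriv f x ≤ C := fun x => by
    obtain ⟨z, hz, hxz⟩ := hper.deriv.exists_mem_Ico₀ hc x
    exact hxz ▸ hC z (Ico_subset_Icc_self hz)
  rw [slope_def_field, div_le_iff₀ (sub_pos.2 hxy)]
  exact image_sub_le_mul_sub_of_deriv_le hf hC' hxy.le

theorem le_deriv_of_forall_le_slope {f : ℝ → ℝ} {x c : ℝ} (hf : DifferentiableAt ℝ f x)
    (hc : ∀ y, x < y → c ≤ slope f x y) : c ≤ deriv f x :=
  ge_of_tendsto ((hasDerivAt_iff_tendsto_slope.mp hf.hasDerivAt).mono_left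
    (nhdsWithin_mono x (s := Ioi x) fun _ hy => ne_of_gt hy)) (eventually_nhdsWithin_of_forall hc)

theorem Function.LeftInverse.slope_apply_apply {f g : ℝ → ℝ} (hfg : LeftInverse f g) (x y : ℝ) :
    slope f (g x) (g y) = (slope g x y)⁻¹ := by
  simp only [slope_def_field, hfg x, hfg y, inv_div]

/-- The larger root of `X ^ 2 - K * X + lam` (junk value `K / 2` when `K ^ 2 < 4 * lam`). -/
def largerRoot (K lam : ℝ) : ℝ := (K + √(K ^ 2 - 4 * lam)) / 2

theorem largerRoot_pos {K : ℝ} (hK : 0 < K) (lam : ℝ) : 0 < largerRoot K lam := by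
  unfold largerRoot
  positivity

theorem largerRoot_mul_sub_self {K lam : ℝ} (h : 4 * lam ≤ K ^ 2) :
    largerRoot K lam * (K - largerRoot K lam) = lam := by
  unfold largerRoot
  linear_combination -Real.sq_sqrt (sub_nonneg.2 h) / 4

theorem mem_Icc_largerRoot {K lam X : ℝ} (hX : X ^ 2 - K * X + lam ≤ 0) :
    X ∈ Icc (K - largerRoot K lam) (largerRoot K lam) := by
  have h := abs_le.mp (Real.abs_le_sqrt (x := 2 * X - K) (y := K ^ 2 - 4 * lam) (by nlinarith))
  unfold largerRoot
  constructor <;> linarith [h.1, h.2]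

def secantSlopes (g : ℝ → ℝ) : Set ℝ := {r | ∃ x y, x < y ∧ slope g x y = r}

section SecantSlopes

variable {g h : ℝ → ℝ} {K lam : ℝ}

theorem StrictMono.slope_pos (hg : StrictMono g) {x y : ℝ} (hxy : x < y) : 0 < slope g x y :=
  (slope_pos_iff_of_le hxy.le).2 (hg hxy)

theorem StrictMono.strictMono_of_rightInverse (hg : StrictMono g) (hgh : RightInverse h g) :
    StrictMono h :=
  fun x y hxy => hg.lt_iff_lt.1 (by rwa [hgh x, hgh y])

theorem inv_le_slope_of_rightInverse (hg : StrictMono g) (hgh : RightInverse h g) {c : ℝ}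
    (hc : ∀ x y, x < y → slope g x y ≤ c) {x y : ℝ} (hxy : x < y) : c⁻¹ ≤ slope h x y :=
  have hh := hg.strictMono_of_rightInverse hgh
  inv_le_of_inv_le₀ (hh.slope_pos hxy)
    ((LeftInverse.slope_apply_apply hgh x y).symm.trans_le (hc _ _ (hh hxy)))

theorem secantSlopes_nonempty (g : ℝ → ℝ) : (secantSlopes g).Nonempty :=
  ⟨_, 0, 1, one_pos, rfl⟩

theorem StrictMono.bddBelow_secantSlopes (hg : StrictMono g) : BddBelow (secantSlopes g) :=
  ⟨0, by rintro _ ⟨x, y, hxy, rfl⟩; exact (hg.slope_pos hxy).le⟩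

theorem secantSlopes_subset_Iio (hlam : 0 < lam) (hg : StrictMono g) (hgh : RightInverse h g)
    (hkey : ∀ x y, x < y → slope g x y ≤ K - lam * slope h x y) : secantSlopes g ⊆ Iio K := by
  rintro _ ⟨x, y, hxy, rfl⟩
  have := (hg.strictMono_of_rightInverse hgh).slope_pos hxy
  exact (hkey x y hxy).trans_lt (by nlinarith)

theorem sSup_secantSlopes_mem_Icc (hlam : 0 < lam) (hg : StrictMono g) (hgh : RightInverse h g)
    (hkey : ∀ x y, x < y → slope g x y ≤ K - lam * slope h x y) :
    sSup (secantSlopes g) ∈ Icc (K - largerRoot K lam) (largerRoot K lam) := by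
  set S := sSup (secantSlopes g)
  have hbdd : BddAbove (secantSlopes g) :=
    ⟨K, fun r hr => (secantSlopes_subset_Iio hlam hg hgh hkey hr).le⟩
  have hS : 0 < S := (hg.slope_pos one_pos).trans_le (le_csSup hbdd ⟨0, 1, one_pos, rfl⟩)
  have hSK : S ≤ K - lam / S := by
    refine csSup_le (secantSlopes_nonempty g) ?_
    rintro _ ⟨x, y, hxy, rfl⟩
    have hSh : S⁻¹ ≤ slope h x y :=
      inv_le_slope_of_rightInverse hg hgh (fun x y hxy => le_csSup hbdd ⟨x, y, hxy, rfl⟩) hxy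
    calc slope g x y ≤ K - lam * slope h x y := hkey x y hxy
      _ ≤ K - lam / S := by rw [div_eq_mul_inv]; gcongr
  refine mem_Icc_largerRoot ?_
  rw [le_sub_comm, div_le_iff₀ hS] at hSK
  nlinarith

theorem sInf_secantSlopes_mem_Icc (hlam : 0 < lam) (hg : StrictMono g) (hhg : LeftInverse h g)
    (hgh : RightInverse h g) (hkey : ∀ x y, x < y → slope g x y ≤ K - lam * slope h x y) :
    sInf (secantSlopes g) ∈ Icc (K - largerRoot K lam) (largerRoot K lam) := by
  set s := sInf (secantSlopes g)
  have hsK : s < K := (csInf_le hg.bddBelow_secantSlopes ⟨0, 1, one_pos, rfl⟩).trans_lt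
    (secantSlopes_subset_Iio hlam hg hgh hkey ⟨0, 1, one_pos, rfl⟩)
  -- apply `hkey` to the pair `g x < g y`, whose `h`-slope is `(slope g x y)⁻¹`
  have hKs : lam / (K - s) ≤ s := by
    refine le_csInf (secantSlopes_nonempty g) ?_
    rintro _ ⟨x, y, hxy, rfl⟩
    have hr := hg.slope_pos hxy
    have hkey' := hkey (g x) (g y) (hg hxy)
    rw [hhg.slope_apply_apply] at hkey'
    have hs : s ≤ slope g (g x) (g y) := csInf_le hg.bddBelow_secantSlopes ⟨_, _, hg hxy, rfl⟩
    rw [div_le_iff₀ (sub_pos.2 hsK), ← div_le_iff₀' hr, div_eq_mul_inv]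
    linarith
  refine mem_Icc_largerRoot ?_
  rw [div_le_iff₀ (sub_pos.2 hsK)] at hKs
  nlinarith

theorem slope_mem_Icc_largerRoot (hlam : 0 < lam) (hg : StrictMono g) (hhg : LeftInverse h g)
    (hgh : RightInverse h g) (hkey : ∀ x y, x < y → slope g x y ≤ K - lam * slope h x y)
    {x y : ℝ} (hxy : x < y) : slope g x y ∈ Icc (K - largerRoot K lam) (largerRoot K lam) :=
  have hr : slope g x y ∈ secantSlopes g := ⟨x, y, hxy, rfl⟩
  ⟨(sInf_secantSlopes_mem_Icc hlam hg hhg hgh hkey).1.trans (csInf_le hg.bddBelow_secantSlopes hr),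
    (le_csSup ⟨K, fun _ hr' => (secantSlopes_subset_Iio hlam hg hgh hkey hr').le⟩ hr).trans
      (sSup_secantSlopes_mem_Icc hlam hg hgh hkey).2⟩

-- With `K = 1 + λ + M`, `A = largerRoot K λ` and `y > x`:
-- `K - A ≤ slope g x y ≤ 1 + λ + slope φ x y - λ / A`, and `K - A = λ / A`.
theorem two_mul_div_largerRoot_sub_le_deriv {φ : ℝ → ℝ} {M x : ℝ} (hlam : 0 < lam)
    (hg : StrictMono g) (hhg : LeftInverse h g) (hgh : RightInverse h g) (hM : 0 ≤ M)
    (hφM : ∀ x y, x < y → slope φ x y ≤ M)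
    (hslope : ∀ x y, x ≠ y → slope g x y = 1 + lam + slope φ x y - lam * slope h x y)
    (hφ : DifferentiableAt ℝ φ x) :
    2 * lam / largerRoot (1 + lam + M) lam - (1 + lam) ≤ deriv φ x := by
  have hdisc : 4 * lam ≤ (1 + lam + M) ^ 2 := by nlinarith [sq_nonneg (1 - lam)]
  set K := 1 + lam + M
  set A := largerRoot K lam
  have hA : 0 < A := largerRoot_pos (by positivity) lam
  have hKA : K - A = lam / A := by
    rw [eq_div_iff hA.ne', mul_comm, largerRoot_mul_sub_self hdisc]
  have hkey : ∀ x y, x < y → slope g x y ≤ K - lam * slope h x y := fun x y hxy => by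
    linarith [hslope x y hxy.ne, hφM x y hxy]
  have hgA : ∀ x y, x < y → slope g x y ∈ Icc (K - A) A := fun _ _ hxy =>
    slope_mem_Icc_largerRoot hlam hg hhg hgh hkey hxy
  refine le_deriv_of_forall_le_slope hφ fun y hxy => ?_
  have hhA := inv_le_slope_of_rightInverse hg hgh (fun x y hxy => (hgA x y hxy).2) hxy
  have hhA' : lam / A ≤ lam * slope h x y := by rw [div_eq_mul_inv]; gcongr
  linarith [(hgA x y hxy).1, hslope x y hxy.ne, mul_div_assoc 2 lam A]

end SecantSlopes

theorem HasInvGraph.exists_strictMono_slope_eq {lam α₁ α₂ : ℝ} {φ : ℝ → ℝ} (hφ : Continuous φ)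
    (hφper : Periodic φ 1)
    (hinv : HasInvGraph fun p : ℝ × ℝ => (p.1 + α₁ + lam * p.2 + φ p.1, α₂ + lam * p.2 + φ p.1)) :
    ∃ g h : ℝ → ℝ, StrictMono g ∧ LeftInverse h g ∧ RightInverse h g ∧
      ∀ x y, x ≠ y → slope g x y = 1 + lam + slope φ x y - lam * slope h x y := by
  obtain ⟨ψ, hψ, hψper, hΓ⟩ := hinv
  set g : ℝ → ℝ := fun x => x + α₁ + lam * ψ x + φ x with hg_def
  set h : ℝ → ℝ := fun u => u - α₁ + α₂ - ψ u with hh_def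
  have hhg : LeftInverse h g := fun x => by
    have hψg : ψ (g x) = α₂ + lam * ψ x + φ x := (hΓ.subset ⟨(x, ψ x), rfl, rfl⟩).symm
    show g x - α₁ + α₂ - ψ (g x) = x
    rw [hψg, hg_def]
    ring
  have hgc : Continuous g := by fun_prop
  have hgper : ∀ x, g (x + 1) = g x + 1 := fun x => by simp only [hg_def, hψper x, hφper x]; ring
  have hgsurj : Surjective g :=
    hgc.surjective_of_periodic_sub one_ne_zero fun x => by simp only [hgper]; ring
  have hg : StrictMono g := (hgc.strictMono_of_inj hhg.injective).resolve_right fun hanti => by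
    have := hanti (zero_lt_one' ℝ)
    rw [← zero_add (1 : ℝ), hgper] at this
    linarith
  refine ⟨g, h, hg, hhg, hhg.rightInverse_of_surjective hgsurj, fun x y hxy => ?_⟩
  have hyx : y - x ≠ 0 := sub_ne_zero.2 hxy.symm
  simp only [slope_def_field, hg_def, hh_def]
  field_simp
  ring

theorem neg_lt_and_inv_one_add_div_le {lam A m : ℝ} (hlam₀ : 0 < lam) (hlam₁ : lam < 1)
    (hA : 0 < A) (hm : 2 * lam / A - (1 + lam) ≤ m) :
    -(1 + lam) < m ∧ (1 + m / (1 + lam))⁻¹ ≤ A / lam := by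
  have h2lam : 2 * lam ≤ A * (1 + lam + m) := by
    rw [← div_le_iff₀' hA]
    linarith
  have hpos : 0 < 1 + lam + m := by nlinarith
  refine ⟨by linarith, ?_⟩
  rw [show 1 + m / (1 + lam) = (1 + lam + m) / (1 + lam) by field_simp, inv_div,
    div_le_div_iff₀ hpos hlam₀]
  nlinarith

theorem criterion_dim1_general (lam α₁ α₂ : ℝ) (hlam : lam ∈ Set.Ioo (0 : ℝ) 1)
    (φ : ℝ → ℝ) (hφ : ContDiff ℝ 1 φ) (hφper : ∀ x, φ (x + 1) = φ x)
    (M m : ℝ)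
    -- M = max_{[0,1]} φ′ and m = min_{[0,1]} φ′
    (hM₁ : ∀ x ∈ Set.Icc (0 : ℝ) 1, deriv φ x ≤ M)
    (hm₂ : ∃ x ∈ Set.Icc (0 : ℝ) 1, deriv φ x = m)
    (hinv : HasInvGraph (fun p : ℝ × ℝ =>
      (p.1 + α₁ + lam * p.2 + φ p.1, α₂ + lam * p.2 + φ p.1))) :
    -(1 + lam) < m ∧
      (1 + m / (1 + lam))⁻¹ ≤
        max ((1 + lam) / 2 + M / 2 +
              Real.sqrt ((1 - lam) ^ 2 / 4 + M ^ 2 / 4 + (1 + lam) * M / 2))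
          ((1 / (2 * lam)) * (1 + lam + M + Real.sqrt ((1 + lam + M) ^ 2 - 4 * lam))) := by
  obtain ⟨hlam₀, hlam₁⟩ := hlam
  obtain ⟨x₀, -, rfl⟩ := hm₂
  have hφd : Differentiable ℝ φ := hφ.differentiable one_ne_zero
  have hφM : ∀ x y, x < y → slope φ x y ≤ M := fun _ _ =>
    slope_le_of_periodic_of_deriv_le hφper one_pos hφd hM₁
  have hM : 0 ≤ M := by
    have hφ10 : φ 1 = φ 0 := by simpa using hφper 0
    simpa [slope_def_field, hφ10] using hφM 0 1 one_pos
  obtain ⟨g, h, hg, hhg, hgh, hslope⟩ := hinv.exists_strictMono_slope_eq hφd.continuous hφper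
  obtain ⟨hm, hbound⟩ := neg_lt_and_inv_one_add_div_le hlam₀ hlam₁
    (largerRoot_pos (by positivity) lam)
    (two_mul_div_largerRoot_sub_le_deriv hlam₀ hg hhg hgh hM hφM hslope (hφd x₀))
  refine ⟨hm, hbound.trans (le_max_of_le_right (le_of_eq ?_))⟩
  simp only [largerRoot]
  ring

theorem criterion_dim1 (lam α₁ α₂ : ℝ) (hlam : lam ∈ Set.Ioo (0 : ℝ) 1)
    (φ : ℝ → ℝ) (hφ : ContDiff ℝ 1 φ) (hφper : ∀ x, φ (x + 1) = φ x)
    (hφavg : (∫ x in (0 : ℝ)..1, φ x) = 0)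
    (M m : ℝ)
    -- M = max_{[0,1]} φ′ and m = min_{[0,1]} φ′
    (hM₁ : ∀ x ∈ Set.Icc (0 : ℝ) 1, deriv φ x ≤ M) (hM₂ : ∃ x ∈ Set.Icc (0 : ℝ) 1, deriv φ x = M)
    (hm₁ : ∀ x ∈ Set.Icc (0 : ℝ) 1, m ≤ deriv φ x) (hm₂ : ∃ x ∈ Set.Icc (0 : ℝ) 1, deriv φ x = m)
    (hinv : HasInvGraph (fun p : ℝ × ℝ =>
      (p.1 + α₁ + lam * p.2 + φ p.1, α₂ + lam * p.2 + φ p.1))) :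
    -(1 + lam) < m ∧
      (1 + m / (1 + lam))⁻¹ ≤
        max ((1 + lam) / 2 + M / 2 +
              Real.sqrt ((1 - lam) ^ 2 / 4 + M ^ 2 / 4 + (1 + lam) * M / 2))
          ((1 / (2 * lam)) * (1 + lam + M + Real.sqrt ((1 + lam + M) ^ 2 - 4 * lam))) :=
  criterion_dim1_general lam α₁ α₂ hlam φ hφ hφper M m hM₁ hm₂ hinv

end
end

section
/- Let λ∈(0,1). There exist constants C>0 and M₀>0 such that for every M∈(0,M₀] and every m∈(−(1+λ),0] satisfying (1 + m/(1+λ))⁻¹ ≤ (1+λ)/2 + M/2 + ((1−λ)²/4 + M²/4 + (1+λ)M/2)^{1/2}, one has −m ≤ ((1+λ)/(1−λ))·M + C·M². -/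
/-!
Put `x = 1 + m / (1 + λ)` and let `R` be the right-hand side of the hypothesis. From `x⁻¹ ≤ R`
we get `-m / (1 + λ) = 1 - x ≤ 1 - R⁻¹ ≤ R - 1`. Linearising the square root at
`((1 - λ) / 2) ^ 2` bounds `R - 1` by `(M + M ^ 2 / 4) / (1 - λ)`, which gives the claim with
`C = (1 + λ) / (4 (1 - λ))` and any `M₀`.
-/

lemma Real.sqrt_sq_add_le {a x : ℝ} (ha : 0 < a) (hx : 0 ≤ a ^ 2 + x) :
    √(a ^ 2 + x) ≤ a + x / (2 * a) := by
  have hxa : x / (2 * a) * (2 * a) = x := div_mul_cancel₀ x (by positivity)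
  rw [Real.sqrt_le_iff]
  constructor <;> nlinarith [sq_nonneg (x / (2 * a))]

lemma Real.one_sub_inv_le_sub_one {R : ℝ} (hR : 0 < R) : 1 - R⁻¹ ≤ R - 1 :=
  (Real.one_sub_inv_le_log_of_pos hR).trans (Real.log_le_sub_one_of_pos hR)

lemma neg_le_mul_sub_one_of_inv_one_add_div_le {s m R : ℝ} (hs : 0 < s) (hm : -s < m)
    (h : (1 + m / s)⁻¹ ≤ R) : -m ≤ s * (R - 1) := by
  have hx : 0 < 1 + m / s := by
    have : -1 < m / s := by rwa [lt_div_iff₀ hs, neg_one_mul]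
    linarith
  have hR : 0 < R := (inv_pos.mpr hx).trans_le h
  have hRx : R⁻¹ ≤ 1 + m / s := inv_le_of_inv_le₀ hx h
  have hms : s * (m / s) = m := mul_div_cancel₀ m hs.ne'
  nlinarith [Real.one_sub_inv_le_sub_one hR]

theorem case1_asymptotics (lam : ℝ) (hlam : lam ∈ Set.Ioo (0 : ℝ) 1) :
    ∃ C M₀ : ℝ, 0 < C ∧ 0 < M₀ ∧
      ∀ M m : ℝ, 0 < M → M ≤ M₀ → -(1 + lam) < m → m ≤ 0 →
        (1 + m / (1 + lam))⁻¹ ≤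
            (1 + lam) / 2 + M / 2 +
              Real.sqrt ((1 - lam) ^ 2 / 4 + M ^ 2 / 4 + (1 + lam) * M / 2) →
        -m ≤ ((1 + lam) / (1 - lam)) * M + C * M ^ 2 := by
  obtain ⟨hlam₀, hlam₁⟩ := hlam
  have hd : 0 < 1 - lam := by linarith
  refine ⟨(1 + lam) / (4 * (1 - lam)), 1, by positivity, one_pos, ?_⟩
  intro M m hM _ hm _ h
  set δ := M ^ 2 / 4 + (1 + lam) * M / 2
  have hA : (1 - lam) ^ 2 / 4 + δ = ((1 - lam) / 2) ^ 2 + δ := by ring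
  have hsqrt : √(((1 - lam) / 2) ^ 2 + δ) ≤ (1 - lam) / 2 + δ / (1 - lam) :=
    (Real.sqrt_sq_add_le (by positivity) (by positivity)).trans_eq (by ring)
  rw [add_assoc ((1 - lam) ^ 2 / 4), hA] at h
  calc -m ≤ (1 + lam) * ((1 + lam) / 2 + M / 2 + √(((1 - lam) / 2) ^ 2 + δ) - 1) :=
        neg_le_mul_sub_one_of_inv_one_add_div_le (by positivity) hm h
    _ ≤ (1 + lam) * ((1 + lam) / 2 + M / 2 + ((1 - lam) / 2 + δ / (1 - lam)) - 1) := by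
        gcongr
    _ = ((1 + lam) / (1 - lam)) * M + (1 + lam) / (4 * (1 - lam)) * M ^ 2 := by
        field_simp
        ring
end

section
/- Let λ∈(0,1). There exist constants C>0 and M₀>0 such that for every M∈(0,M₀] and every m∈(−(1+λ),0] satisfying (1 + m/(1+λ))⁻¹ ≤ (1/(2λ))·(1+λ+M+((1+λ+M)²−4λ)^{1/2}), one has −m ≤ 1−λ² + (λ(1+λ)/(1−λ))·M + C·M². -/
/-!
Since `(1+λ+M)² - 4λ = (1-λ)² + 2(1+λ)M + M²` and `M ≤ (1+λ)M/(1-λ)`, the square root is at most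
`(1-λ) + (1+λ)M/(1-λ)`, so the larger root `(1+λ+M+√…)/(2λ)` is at most `(1-λ+M)/(λ(1-λ))`.
Inverting the hypothesis then gives `1 + m/(1+λ) ≥ λ(1-λ)/(1-λ+M)`, i.e.
`-m ≤ 1 - λ² + λ(1+λ)M/(1-λ+M) ≤ 1 - λ² + λ(1+λ)M/(1-λ)`: the bound holds even without the
quadratic term, for every `M ≥ 0`.
-/

open Real

lemma sqrt_discrim_le {lam M : ℝ} (hl0 : 0 ≤ lam) (hl1 : lam < 1) (hM : 0 ≤ M) :
    √((1 + lam + M) ^ 2 - 4 * lam) ≤ 1 - lam + (1 + lam) * M / (1 - lam) := by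
  have h1l : 0 < 1 - lam := by linarith
  set t := (1 + lam) * M / (1 - lam) with ht
  have hMt : M ≤ t := by rw [ht, le_div_iff₀ h1l]; nlinarith
  have hteq : (1 - lam) * t = (1 + lam) * M := by rw [ht]; field_simp
  rw [Real.sqrt_le_left (by linarith)]
  nlinarith

lemma larger_root_le {lam M : ℝ} (hl0 : 0 < lam) (hl1 : lam < 1) (hM : 0 ≤ M) :
    1 / (2 * lam) * (1 + lam + M + √((1 + lam + M) ^ 2 - 4 * lam)) ≤
      (1 - lam + M) / (lam * (1 - lam)) := by
  have h1l : 0 < 1 - lam := by linarith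
  calc 1 / (2 * lam) * (1 + lam + M + √((1 + lam + M) ^ 2 - 4 * lam))
      ≤ 1 / (2 * lam) * (1 + lam + M + (1 - lam + (1 + lam) * M / (1 - lam))) := by
        gcongr; exact sqrt_discrim_le hl0.le hl1 hM
    _ = (1 - lam + M) / (lam * (1 - lam)) := by field_simp; ring

lemma neg_le_of_inv_le_larger_root {lam M m : ℝ} (hl0 : 0 < lam) (hl1 : lam < 1) (hM : 0 ≤ M)
    (hm : -(1 + lam) < m)
    (h : (1 + m / (1 + lam))⁻¹ ≤
      1 / (2 * lam) * (1 + lam + M + √((1 + lam + M) ^ 2 - 4 * lam))) :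
    -m ≤ 1 - lam ^ 2 + lam * (1 + lam) / (1 - lam) * M := by
  have h1l : 0 < 1 - lam := by linarith
  have h1p : 0 < 1 + lam := by linarith
  have hx : 0 < 1 + m / (1 + lam) := by
    have : -1 < m / (1 + lam) := by rw [lt_div_iff₀ h1p]; linarith
    linarith
  have hR : 0 < (1 - lam + M) / (lam * (1 - lam)) := by positivity
  have hxR : lam * (1 - lam) / (1 - lam + M) ≤ 1 + m / (1 + lam) := by
    have := (inv_le_comm₀ hx hR).1 (h.trans (larger_root_le hl0 hl1 hM))
    rwa [inv_div] at this
  calc -m = (1 + lam) * (1 - (1 + m / (1 + lam))) := by field_simp; ring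
    _ ≤ (1 + lam) * (1 - lam * (1 - lam) / (1 - lam + M)) := by gcongr
    _ = 1 - lam ^ 2 + lam * (1 + lam) / (1 - lam + M) * M := by field_simp; ring
    _ ≤ 1 - lam ^ 2 + lam * (1 + lam) / (1 - lam) * M := by gcongr; linarith

theorem case2_asymptotics (lam : ℝ) (hlam : lam ∈ Set.Ioo (0 : ℝ) 1) :
    ∃ C M₀ : ℝ, 0 < C ∧ 0 < M₀ ∧
      ∀ M m : ℝ, 0 < M → M ≤ M₀ → -(1 + lam) < m → m ≤ 0 →
        (1 + m / (1 + lam))⁻¹ ≤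
            (1 / (2 * lam)) * (1 + lam + M + Real.sqrt ((1 + lam + M) ^ 2 - 4 * lam)) →
        -m ≤ 1 - lam ^ 2 + (lam * (1 + lam) / (1 - lam)) * M + C * M ^ 2 := by
  refine ⟨1, 1, one_pos, one_pos, fun M m hM _ hm _ h => ?_⟩
  have := neg_le_of_inv_le_larger_root hlam.1 hlam.2 hM.le hm h
  linarith [sq_nonneg M]
end

section
/- Let λ∈(0,1) and let S:ℝ^d×ℝ^d→ℝ be a C² function with S(x+m,X+m)=S(x,X) for all m∈ℤ^d, such that for all (x,X) the matrices ∂²S/∂x²(x,X) and ∂²S/∂X²(x,X) are positive definite and ∂²S/∂x∂X(x,X) is negative definite, and S(x,X)/‖x−X‖ → +∞ as ‖x−X‖→∞. Let F:ℝ^{2d}→ℝ^{2d} be a C¹ diffeomorphism with F(x+m,y)=F(x,y)+(m,0) for all m∈ℤ^d, generated by S (i.e. writing F(x,y)=(X,Y): λy=−(∂S/∂x)(x,X) and Y=(∂S/∂X)(x,X)). Suppose F admits a C⁰-invariant Lagrangian graph L={(x,Ψ(x))} with Ψ=c+Dη (c∈ℝ^d, η C¹ ℤ^d-periodic), and let g:ℝ^d→ℝ^d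 be the homeomorphism with F(x,Ψ(x))=(g(x),Ψ(g(x))) for all x. Define Ψ̂(x):=⟨c,x⟩+η(x) and K(x,X):=S(x,X)+λΨ̂(x)−Ψ̂(X). Then: (i) for each X∈ℝ^d, the function x↦K(x,X) attains its minimum over ℝ^d at the unique point x=g⁻¹(X); and (ii) for each x∈ℝ^d, the function X↦K(x,X) attains its minimum over ℝ^d at the unique point X=g(x). -/
noncomputable section

open Real

/-!
A minimizer exists because `K(·, X)` and `K(x, ·)` are continuous and coercive: `S` grows
superlinearly in `‖x - X‖`, while `Ψ̂` grows at most linearly since `η` is bounded.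
At a minimizer `x₀` of `K(·, X)` the first-order condition reads `∂S/∂x(x₀, X) = -λ Ψ(x₀)`, and
the generating relation at the invariant point `(x₀, Ψ x₀)` gives `∂S/∂x(x₀, g x₀) = -λ Ψ(x₀)`.
Since `∂²S/∂x∂X` is negative definite, `⟨v, ∂S/∂x(x₀, X + t v)⟩` is strictly decreasing in `t`,
so `X ↦ ∂S/∂x(x₀, X)` is injective and `X = g x₀`. Every minimizer is therefore `g⁻¹ X`, hence
it is the only one and the minimum is strict. Part (ii) is symmetric, with `Y = ∂S/∂X(x, X)`
and injectivity of `x ↦ ∂S/∂X(x, X)`.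
-/

open Function Filter Topology Matrix

theorem dotProduct_apply_single {ι : Type*} [Fintype ι] [DecidableEq ι] (L : (ι → ℝ) →L[ℝ] ℝ)
    (v : ι → ℝ) : v ⬝ᵥ (fun i => L (Pi.single i 1)) = L v := by
  conv_rhs => rw [pi_eq_sum_univ' v]
  simp [dotProduct]

theorem fderiv_apply_add_lt_of_fderiv_fderiv_lt_zero {E : Type*} [NormedAddCommGroup E]
    [NormedSpace ℝ E] {f : E → ℝ} (hf : ContDiff ℝ 2 f) {p w u : E}
    (h : ∀ t : ℝ, fderiv ℝ (fderiv ℝ f) (p + t • w) w u < 0) :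
    fderiv ℝ f (p + w) u < fderiv ℝ f p u := by
  have hf' : Differentiable ℝ (fderiv ℝ f) :=
    (hf.fderiv_right (m := 1) (by norm_num)).differentiable one_ne_zero
  have hderiv (t : ℝ) : HasDerivAt (fun t : ℝ => fderiv ℝ f (p + t • w) u)
      (fderiv ℝ (fderiv ℝ f) (p + t • w) w u) t := by
    have hline : HasDerivAt (fun t : ℝ => p + t • w) w t := by
      simpa using ((hasDerivAt_id t).smul_const w).const_add p
    simpa using ((hf' _).hasFDerivAt.comp_hasDerivAt t hline).clm_apply (hasDerivAt_const t u)
  have := strictAnti_of_deriv_neg (fun t => (hderiv t).deriv ▸ h t) zero_lt_one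
  rwa [one_smul, zero_smul, add_zero] at this

section Coercivity

variable {E : Type*} [NormedAddCommGroup E] [ProperSpace E]

theorem tendsto_cocompact_add_of_superlinear {s h : E → ℝ} {a : E} {C C' : ℝ}
    (hs : ∀ A, ∃ R, ∀ y, R ≤ ‖y - a‖ → A ≤ s y / ‖y - a‖)
    (hh : ∀ y, |h y| ≤ C * ‖y‖ + C') :
    Tendsto (fun y => s y + h y) (cocompact E) atTop := by
  obtain ⟨R, hR⟩ := hs (|C| + 1)
  refine tendsto_atTop_mono' _ ?_
    (tendsto_atTop_add_const_right _ (-((|C| + 1) * ‖a‖ + C')) tendsto_norm_cocompact_atTop)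
  filter_upwards [tendsto_norm_cocompact_atTop.eventually_ge_atTop (max R 1 + ‖a‖)] with y hy
  have hya : max R 1 ≤ ‖y - a‖ := by linarith [norm_sub_norm_le y a]
  have hpos : 0 < ‖y - a‖ := one_pos.trans_le ((le_max_right _ _).trans hya)
  have hs_ge : (|C| + 1) * ‖y - a‖ ≤ s y :=
    (le_div_iff₀ hpos).1 (hR y ((le_max_left _ _).trans hya))
  have hC : C * ‖y‖ ≤ |C| * ‖y‖ := by gcongr; exact le_abs_self C
  have hh_ge : -(|C| * ‖y‖ + C') ≤ h y := by linarith [neg_abs_le (h y), hh y]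
  nlinarith [norm_sub_norm_le y a, abs_nonneg C]

theorem exists_forall_le_of_superlinear {f s ψ : E → ℝ} {α β C C' : ℝ} (a : E)
    (hf : ∀ y, f y = s y + (α * ψ y + β)) (hs_cont : Continuous s) (hψ_cont : Continuous ψ)
    (hs : ∀ A, ∃ R, ∀ y, R ≤ ‖y - a‖ → A ≤ s y / ‖y - a‖) (hψ : ∀ y, |ψ y| ≤ C * ‖y‖ + C') :
    ∃ x, ∀ y, f x ≤ f y := by
  obtain rfl : f = _ := funext hf
  refine (hs_cont.add ((hψ_cont.const_mul α).add continuous_const)).exists_forall_le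
    (tendsto_cocompact_add_of_superlinear hs (C := |α| * C) (C' := |α| * C' + |β|) fun y => ?_)
  calc |α * ψ y + β| ≤ |α| * |ψ y| + |β| := by rw [← abs_mul]; exact abs_add_le _ _
    _ ≤ |α| * (C * ‖y‖ + C') + |β| := by gcongr; exact hψ y
    _ = |α| * C * ‖y‖ + (|α| * C' + |β|) := by ring

end Coercivity

theorem forall_lt_of_exists_forall_le {α : Type*} {f : α → ℝ} {a : α}
    (hex : ∃ x, ∀ y, f x ≤ f y) (huniq : ∀ x, (∀ y, f x ≤ f y) → x = a) :
    ∀ y, y ≠ a → f a < f y := by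
  obtain ⟨x, hx⟩ := hex
  obtain rfl := huniq x hx
  exact fun y hy => (hx y).lt_of_ne fun hxy => hy (huniq y fun z => hxy ▸ hx z)

section Gradient

variable {d : ℕ}

theorem dotProduct_gradVec (f : (Fin d → ℝ) → ℝ) (x v : Fin d → ℝ) :
    v ⬝ᵥ gradVec f x = fderiv ℝ f x v :=
  dotProduct_apply_single _ v

theorem gradVec_dotProduct_add {η : (Fin d → ℝ) → ℝ} {x : Fin d → ℝ}
    (hη : DifferentiableAt ℝ η x) (c : Fin d → ℝ) :
    gradVec (fun y => (∑ i, c i * y i) + η y) x = c + gradVec η x := by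
  have hlin : HasFDerivAt (fun y : Fin d → ℝ => ∑ i, c i * y i)
      (∑ i, c i • ContinuousLinearMap.proj (R := ℝ) (φ := fun _ : Fin d => ℝ) i) x :=
    HasFDerivAt.fun_sum fun i _ => (hasFDerivAt_apply i x).const_mul (c i)
  ext j
  simp only [gradVec]
  rw [(hlin.fun_add hη.hasFDerivAt).fderiv]
  simp [gradVec, Pi.single_apply]

theorem gradVec_add_smul_eq_zero_of_forall_le {f s ψ : (Fin d → ℝ) → ℝ} {α β : ℝ}
    {x : Fin d → ℝ} (hf : ∀ y, f y = s y + (α * ψ y + β)) (hs : DifferentiableAt ℝ s x)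
    (hψ : DifferentiableAt ℝ ψ x) (hmin : ∀ y, f x ≤ f y) :
    gradVec s x + α • gradVec ψ x = 0 := by
  have hderiv : HasFDerivAt f (fderiv ℝ s x + α • fderiv ℝ ψ x) x := by
    rw [funext hf]
    exact hs.hasFDerivAt.fun_add ((hψ.hasFDerivAt.const_mul α).add_const β)
  have hzero := hderiv.fderiv.symm.trans (IsLocalMin.fderiv_eq_zero (.of_forall hmin))
  ext i
  simpa [gradVec] using congrArg (· (Pi.single i 1)) hzero

theorem forall_lt_of_superlinear_of_unique_critical {f s ψ : (Fin d → ℝ) → ℝ}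
    {α β C C' : ℝ} {a x₀ : Fin d → ℝ} (hf : ∀ y, f y = s y + (α * ψ y + β))
    (hs : Differentiable ℝ s) (hψ : Differentiable ℝ ψ)
    (hsup : ∀ A, ∃ R, ∀ y, R ≤ ‖y - a‖ → A ≤ s y / ‖y - a‖)
    (hgrowth : ∀ y, |ψ y| ≤ C * ‖y‖ + C')
    (hcrit : ∀ x, gradVec s x + α • gradVec ψ x = 0 → x = x₀) :
    ∀ y, y ≠ x₀ → f x₀ < f y :=
  forall_lt_of_exists_forall_le
    (exists_forall_le_of_superlinear a hf hs.continuous hψ.continuous hsup hgrowth)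
    fun x hx => hcrit x (gradVec_add_smul_eq_zero_of_forall_le hf (hs x) (hψ x) hx)

end Gradient

section Twist

variable {d : ℕ} {S : (Fin d → ℝ) → (Fin d → ℝ) → ℝ}

theorem dotProduct_grad1 {x X : Fin d → ℝ} (hS : DifferentiableAt ℝ (uncurry S) (x, X))
    (v : Fin d → ℝ) : v ⬝ᵥ grad1 S x X = fderiv ℝ (uncurry S) (x, X) (v, 0) := by
  have hslice : HasFDerivAt (S · X) ((fderiv ℝ (uncurry S) (x, X)).comp (.inl ℝ _ _)) x :=
    hS.hasFDerivAt.comp (f := fun x' => (x', X)) x (hasFDerivAt_prodMk_left x X)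
  rw [show grad1 S x X = gradVec (S · X) x from rfl, dotProduct_gradVec, hslice.fderiv]
  rfl

theorem dotProduct_grad2 {x X : Fin d → ℝ} (hS : DifferentiableAt ℝ (uncurry S) (x, X))
    (v : Fin d → ℝ) : v ⬝ᵥ grad2 S x X = fderiv ℝ (uncurry S) (x, X) (0, v) := by
  have hslice : HasFDerivAt (S x) ((fderiv ℝ (uncurry S) (x, X)).comp (.inr ℝ _ _)) X :=
    hS.hasFDerivAt.comp (f := fun X' => (x, X')) X (hasFDerivAt_prodMk_right x X)
  rw [show grad2 S x X = gradVec (S x) X from rfl, dotProduct_gradVec, hslice.fderiv]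
  rfl

theorem hessXY_apply (hS : ContDiff ℝ 2 (uncurry S)) (x X : Fin d → ℝ) (i j : Fin d) :
    hessXY S x X i j =
      fderiv ℝ (fderiv ℝ (uncurry S)) (x, X) (Pi.single i 1, 0) (0, Pi.single j 1) := by
  have hS' : DifferentiableAt ℝ (fderiv ℝ (uncurry S)) (x, X) :=
    (hS.fderiv_right (m := 1) (by norm_num)).differentiable one_ne_zero _
  have hgrad2 : (fun x' => grad2 S x' X j) =
      fun x' => fderiv ℝ (uncurry S) (x', X) (0, Pi.single j 1) := by
    ext x'
    rw [← dotProduct_grad2 (hS.differentiable (by norm_num) _), single_one_dotProduct]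
  simp only [hessXY, Matrix.of_apply, hgrad2]
  rw [((hS'.hasFDerivAt.comp x (hasFDerivAt_prodMk_left x X)).clm_apply
    (hasFDerivAt_const _ x)).fderiv]
  simp

theorem dotProduct_hessXY_mulVec (hS : ContDiff ℝ 2 (uncurry S)) (x X v : Fin d → ℝ) :
    v ⬝ᵥ (hessXY S x X *ᵥ v) = fderiv ℝ (fderiv ℝ (uncurry S)) (x, X) (v, 0) (0, v) := by
  set D2 := fderiv ℝ (fderiv ℝ (uncurry S)) (x, X)
  have hrow (i : Fin d) : (hessXY S x X *ᵥ v) i = D2 (Pi.single i 1, 0) (0, v) := by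
    rw [Matrix.mulVec, dotProduct_comm]
    simp only [hessXY_apply hS]
    exact dotProduct_apply_single ((D2 (Pi.single i 1, 0)).comp (.inr ℝ _ _)) v
  rw [funext hrow]
  exact dotProduct_apply_single
    ((ContinuousLinearMap.apply ℝ ℝ (0, v)).comp (D2.comp (.inl ℝ _ _))) v

theorem fderiv_fderiv_inl_inr_lt_zero (hS : ContDiff ℝ 2 (uncurry S))
    (hneg : ∀ x X, (-hessXY S x X).PosDef) (q : (Fin d → ℝ) × (Fin d → ℝ)) {v : Fin d → ℝ}
    (hv : v ≠ 0) : fderiv ℝ (fderiv ℝ (uncurry S)) q (v, 0) (0, v) < 0 := by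
  have := (hneg q.1 q.2).dotProduct_mulVec_pos hv
  rw [star_trivial, Matrix.neg_mulVec, dotProduct_neg, dotProduct_hessXY_mulVec hS] at this
  linarith

theorem grad2_injective (hS : ContDiff ℝ 2 (uncurry S)) (hneg : ∀ x X, (-hessXY S x X).PosDef)
    (X : Fin d → ℝ) : Injective (grad2 S · X) := by
  intro x₁ x₂ h
  by_contra hne
  have hv : x₂ - x₁ ≠ 0 := sub_ne_zero.2 (Ne.symm hne)
  have hlt := fderiv_apply_add_lt_of_fderiv_fderiv_lt_zero hS (p := (x₁, X)) (w := (x₂ - x₁, 0))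
    (u := (0, x₂ - x₁)) fun t => fderiv_fderiv_inl_inr_lt_zero hS hneg _ hv
  have hD := hS.differentiable (by norm_num)
  rw [Prod.mk_add_mk, add_sub_cancel, add_zero, ← dotProduct_grad2 (hD _),
    ← dotProduct_grad2 (hD _)] at hlt
  exact hlt.ne (congrArg _ h.symm)

theorem grad1_injective (hS : ContDiff ℝ 2 (uncurry S)) (hneg : ∀ x X, (-hessXY S x X).PosDef)
    (x : Fin d → ℝ) : Injective (grad1 S x) := by
  intro X₁ X₂ h
  by_contra hne
  have hv : X₂ - X₁ ≠ 0 := sub_ne_zero.2 (Ne.symm hne)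
  have hlt := fderiv_apply_add_lt_of_fderiv_fderiv_lt_zero hS (p := (x, X₁)) (w := (0, X₂ - X₁))
    (u := (X₂ - X₁, 0)) fun t => by
      rw [(hS.contDiffAt.isSymmSndFDerivAt (by simp)).eq]
      exact fderiv_fderiv_inl_inr_lt_zero hS hneg _ hv
  have hD := hS.differentiable (by norm_num)
  rw [Prod.mk_add_mk, add_sub_cancel, add_zero, ← dotProduct_grad1 (hD _),
    ← dotProduct_grad1 (hD _)] at hlt
  exact hlt.ne (congrArg _ h.symm)

end Twist

theorem ZdPeriodic.exists_abs_le {d : ℕ} {η : (Fin d → ℝ) → ℝ} (hper : ZdPeriodic η)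
    (hc : Continuous η) : ∃ C, ∀ x, |η x| ≤ C := by
  obtain ⟨C, hC⟩ := (isCompact_Icc (a := (0 : Fin d → ℝ)) (b := 1)).exists_bound_of_continuousOn
    hc.continuousOn
  refine ⟨C, fun x => ?_⟩
  have hfract : x = (fun i => Int.fract (x i)) + fun i => ((⌊x i⌋ : ℤ) : ℝ) := by
    ext i; exact (Int.fract_add_floor (x i)).symm
  rw [hfract, hper]
  exact hC _ ⟨fun i => Int.fract_nonneg _, fun i => (Int.fract_lt_one _).le⟩

theorem ZdPeriodic.exists_abs_dotProduct_add_le {d : ℕ} {η : (Fin d → ℝ) → ℝ}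
    (hper : ZdPeriodic η) (hc : Continuous η) (c : Fin d → ℝ) :
    ∃ C C', ∀ x, |(∑ i, c i * x i) + η x| ≤ C * ‖x‖ + C' := by
  obtain ⟨Cη, hCη⟩ := hper.exists_abs_le hc
  refine ⟨∑ i, |c i|, Cη, fun x => ?_⟩
  have hlin : |∑ i, c i * x i| ≤ (∑ i, |c i|) * ‖x‖ := by
    rw [Finset.sum_mul]
    refine (Finset.abs_sum_le_sum_abs _ _).trans (Finset.sum_le_sum fun i _ => ?_)
    rw [abs_mul, ← Real.norm_eq_abs (x i)]
    exact mul_le_mul_of_nonneg_left (norm_le_pi_norm x i) (abs_nonneg _)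
  linarith [abs_add_le (∑ i, c i * x i) (η x), hCη x]

theorem minimization_characterization_general (d : ℕ) (lam : ℝ)
    (S : (Fin d → ℝ) → (Fin d → ℝ) → ℝ)
    (hS : ContDiff ℝ 2 (fun p : (Fin d → ℝ) × (Fin d → ℝ) => S p.1 p.2))
    (hneg : ∀ x X : Fin d → ℝ, (-(hessXY S x X)).PosDef)
    (hcoer : ∀ A : ℝ, ∃ R : ℝ, ∀ x X : Fin d → ℝ, R ≤ ‖x - X‖ → A ≤ S x X / ‖x - X‖)
    (F : (Fin d → ℝ) × (Fin d → ℝ) → (Fin d → ℝ) × (Fin d → ℝ))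
    (hgen : ∀ p : (Fin d → ℝ) × (Fin d → ℝ),
      lam • p.2 = -(grad1 S p.1 (F p).1) ∧ (F p).2 = grad2 S p.1 (F p).1)
    (c : Fin d → ℝ) (η : (Fin d → ℝ) → ℝ) (hη : ContDiff ℝ 1 η) (hηper : ZdPeriodic η)
    (Ψ : (Fin d → ℝ) → (Fin d → ℝ)) (hΨ : ∀ x, Ψ x = c + gradVec η x)
    -- g is the homeomorphism with F(x, Ψ x) = (g x, Ψ (g x))
    (g ginv : (Fin d → ℝ) → (Fin d → ℝ))
    (hgl : ∀ x, ginv (g x) = x) (hgr : ∀ x, g (ginv x) = x)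
    (hconj : ∀ x, F (x, Ψ x) = (g x, Ψ (g x)))
    -- Ψ̂(x) = ⟨c,x⟩ + η(x) and K(x,X) = S(x,X) + λΨ̂(x) − Ψ̂(X)
    (Ψhat : (Fin d → ℝ) → ℝ) (hΨhat : ∀ x, Ψhat x = (∑ i, c i * x i) + η x)
    (K : (Fin d → ℝ) → (Fin d → ℝ) → ℝ)
    (hK : ∀ x X, K x X = S x X + lam * Ψhat x - Ψhat X) :
    -- (i) x ↦ K(x,X) attains its minimum exactly at x = g⁻¹(X)
    (∀ X x : Fin d → ℝ, x ≠ ginv X → K (ginv X) X < K x X) ∧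
    -- (ii) X ↦ K(x,X) attains its minimum exactly at X = g(x)
    (∀ x X : Fin d → ℝ, X ≠ g x → K x (g x) < K x X) := by
  have hS_diff : Differentiable ℝ (uncurry S) := hS.differentiable (by norm_num)
  have hΨhat_eq : Ψhat = fun y => (∑ i, c i * y i) + η y := funext hΨhat
  have hη_diff : Differentiable ℝ η := hη.differentiable one_ne_zero
  have hΨhat_diff : Differentiable ℝ Ψhat := by rw [hΨhat_eq]; fun_prop
  have hgradΨhat (x : Fin d → ℝ) : gradVec Ψhat x = Ψ x := by
    rw [hΨhat_eq, gradVec_dotProduct_add (hη_diff x), hΨ]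
  obtain ⟨C, C', hgrowth⟩ : ∃ C C', ∀ y, |Ψhat y| ≤ C * ‖y‖ + C' := by
    simpa only [hΨhat] using hηper.exists_abs_dotProduct_add_le hη.continuous c
  refine ⟨fun X => forall_lt_of_superlinear_of_unique_critical (f := (K · X)) (s := (S · X))
      (α := lam) (β := -Ψhat X) (fun x => by rw [hK]; ring)
      (hS_diff.comp (f := (·, X)) (by fun_prop))
      hΨhat_diff (fun A => (hcoer A).imp fun R hR y => hR y X) hgrowth fun x₀ hcrit => ?_,
    fun x => forall_lt_of_superlinear_of_unique_critical (f := K x) (s := S x)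
      (α := -1) (β := lam * Ψhat x) (fun X => by rw [hK]; ring)
      (hS_diff.comp (f := (x, ·)) (by fun_prop))
      hΨhat_diff (fun A => (hcoer A).imp fun R hR y => by rw [norm_sub_rev]; exact hR x y)
      hgrowth fun X₀ hcrit => ?_⟩
  · have hgen₁ : lam • Ψ x₀ = -grad1 S x₀ (g x₀) := by simpa [hconj] using (hgen (x₀, Ψ x₀)).1
    rw [hgradΨhat, hgen₁, add_neg_eq_zero] at hcrit
    rw [grad1_injective hS hneg x₀ hcrit, hgl]
  · have hgen₂ : Ψ X₀ = grad2 S (ginv X₀) X₀ := by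
      simpa [hconj, hgr] using (hgen (ginv X₀, Ψ (ginv X₀))).2
    rw [hgradΨhat, neg_one_smul, ← sub_eq_add_neg, sub_eq_zero, hgen₂] at hcrit
    rw [grad2_injective hS hneg X₀ hcrit, hgr]

theorem minimization_characterization (d : ℕ) (lam : ℝ) (hlam : lam ∈ Set.Ioo (0 : ℝ) 1)
    (S : (Fin d → ℝ) → (Fin d → ℝ) → ℝ)
    (hS : ContDiff ℝ 2 (fun p : (Fin d → ℝ) × (Fin d → ℝ) => S p.1 p.2))
    (hSper : ∀ (x X : Fin d → ℝ) (m : Fin d → ℤ),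
      S (x + fun i => (m i : ℝ)) (X + fun i => (m i : ℝ)) = S x X)
    (hpos1 : ∀ x X : Fin d → ℝ, (hessXX S x X).PosDef)
    (hpos2 : ∀ x X : Fin d → ℝ, (hessYY S x X).PosDef)
    (hneg : ∀ x X : Fin d → ℝ, (-(hessXY S x X)).PosDef)
    (hcoer : ∀ A : ℝ, ∃ R : ℝ, ∀ x X : Fin d → ℝ, R ≤ ‖x - X‖ → A ≤ S x X / ‖x - X‖)
    (F Finv : (Fin d → ℝ) × (Fin d → ℝ) → (Fin d → ℝ) × (Fin d → ℝ))
    (hF : ContDiff ℝ 1 F) (hFinv : ContDiff ℝ 1 Finv)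
    (hFl : ∀ p, Finv (F p) = p) (hFr : ∀ p, F (Finv p) = p)
    (hFper : ∀ (p : (Fin d → ℝ) × (Fin d → ℝ)) (m : Fin d → ℤ),
      F (p.1 + fun i => (m i : ℝ), p.2) = ((F p).1 + fun i => (m i : ℝ), (F p).2))
    (hgen : ∀ p : (Fin d → ℝ) × (Fin d → ℝ),
      lam • p.2 = -(grad1 S p.1 (F p).1) ∧ (F p).2 = grad2 S p.1 (F p).1)
    (c : Fin d → ℝ) (η : (Fin d → ℝ) → ℝ) (hη : ContDiff ℝ 1 η) (hηper : ZdPeriodic η)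
    (Ψ : (Fin d → ℝ) → (Fin d → ℝ)) (hΨ : ∀ x, Ψ x = c + gradVec η x)
    (hinv : F '' {p | p.2 = Ψ p.1} = {p | p.2 = Ψ p.1})
    -- g is the homeomorphism with F(x, Ψ x) = (g x, Ψ (g x))
    (g ginv : (Fin d → ℝ) → (Fin d → ℝ))
    (hgc : Continuous g) (hginvc : Continuous ginv)
    (hgl : ∀ x, ginv (g x) = x) (hgr : ∀ x, g (ginv x) = x)
    (hconj : ∀ x, F (x, Ψ x) = (g x, Ψ (g x)))
    -- Ψ̂(x) = ⟨c,x⟩ + η(x) and K(x,X) = S(x,X) + λΨ̂(x) − Ψ̂(X)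
    (Ψhat : (Fin d → ℝ) → ℝ) (hΨhat : ∀ x, Ψhat x = (∑ i, c i * x i) + η x)
    (K : (Fin d → ℝ) → (Fin d → ℝ) → ℝ)
    (hK : ∀ x X, K x X = S x X + lam * Ψhat x - Ψhat X) :
    -- (i) x ↦ K(x,X) attains its minimum exactly at x = g⁻¹(X)
    (∀ X x : Fin d → ℝ, x ≠ ginv X → K (ginv X) X < K x X) ∧
    -- (ii) X ↦ K(x,X) attains its minimum exactly at X = g(x)
    (∀ x X : Fin d → ℝ, X ≠ g x → K x (g x) < K x X) :=
  minimization_characterization_general d lam S hS hneg hcoer F hgen c η hη hηper Ψ hΨ g ginv hgl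
    hgr hconj Ψhat hΨhat K hK
end
end
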